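/- arXiv:1609.09368 — 2 statements merged into one kernel-verified Lean document; each statement's English description precedes it below -/
import Mathlib

section
/- Let λ, μ, α, θ > 0, let n₀, N, K be natural numbers with n₀ ≤ N ≤ K. Define the sequence b : ℕ → ℝ backwards by b(K) = λ / (n₀μ + (N - n₀)α + (K - n₀)θ) and, for n₀ + 1 ≤ j ≤ K - 1, b(j) = λ / (λ + n₀μ + min(j - n₀, N - n₀)·α + (j - n₀)θ − (n₀μ + (j + 1 − n₀)θ)·b(j+1)). Then for every j with n₀ + 1 ≤ j ≤ K, we have 0 < b(j) ≤ λ / (n₀μ + min(j − n₀, N − n₀)·α + (j − n₀)θ); in particular the denominator in the recursion is positive, so b is well defined. -/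
/-!
Write `D j = n₀μ + min(j − n₀, N − n₀)α + (j − n₀)θ` for the rate of leaving state `(0, j)` other
than by an arrival, and `c j = n₀μ + (j + 1 − n₀)θ` for the rate of the downward transition out of
`(0, j + 1)`. Then the recursion reads `b j = λ / (λ + D j − c j · b (j + 1))`, and `b K = λ / D K`.
Since `c j ≤ D (j + 1)`, the bound `b (j + 1) ≤ λ / D (j + 1)` gives `c j · b (j + 1) ≤ λ`, so the
denominator of `b j` is at least `D j > 0`; downward induction from `K` does the rest.
-/

lemma div_add_sub_mul_bounds {lam d c d' b' : ℝ} (hlam : 0 < lam) (hd : 0 < d) (hd' : 0 < d')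
    (hc : 0 ≤ c) (hcd' : c ≤ d') (hb' : b' ≤ lam / d') :
    0 < lam / (lam + d - c * b') ∧ lam / (lam + d - c * b') ≤ lam / d := by
  have hcb' : c * b' ≤ lam :=
    calc c * b' ≤ c * (lam / d') := mul_le_mul_of_nonneg_left hb' hc
      _ ≤ d' * (lam / d') := mul_le_mul_of_nonneg_right hcd' (div_nonneg hlam.le hd'.le)
      _ = lam := mul_div_cancel₀ lam hd'.ne'
  have hden : d ≤ lam + d - c * b' := by linarith
  exact ⟨div_pos hlam (hd.trans_le hden), div_le_div_of_nonneg_left hlam.le hd hden⟩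

theorem backward_recursion_bounds {lam : ℝ} (hlam : 0 < lam) {D c b : ℕ → ℝ} {m K : ℕ}
    (hD : ∀ j, m ≤ j → j ≤ K → 0 < D j)
    (hc : ∀ j, m ≤ j → j < K → 0 ≤ c j ∧ c j ≤ D (j + 1))
    (hbK : b K = lam / D K)
    (hbrec : ∀ j, m ≤ j → j < K → b j = lam / (lam + D j - c j * b (j + 1))) :
    ∀ j, m ≤ j → j ≤ K → 0 < b j ∧ b j ≤ lam / D j := by
  intro j hmj hjK
  induction hjK using Nat.decreasingInduction with
  | self => exact ⟨hbK ▸ div_pos hlam (hD K hmj le_rfl), hbK.le⟩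
  | of_succ j hjK ih =>
    obtain ⟨hc0, hcD⟩ := hc j hmj hjK
    rw [hbrec j hmj hjK]
    exact div_add_sub_mul_bounds hlam (hD j hmj hjK.le) (hD (j + 1) (by omega) hjK) hc0 hcD
      (ih (by omega)).2

noncomputable def levelZeroOutRate (mu alpha th : ℝ) (n0 N j : ℕ) : ℝ :=
  n0 * mu + min ((j : ℝ) - n0) ((N : ℝ) - n0) * alpha + ((j : ℝ) - n0) * th

section levelZeroOutRate

variable {mu alpha th : ℝ} {n0 N j : ℕ}

lemma levelZeroOutRate_of_le (hNj : N ≤ j) :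
    levelZeroOutRate mu alpha th n0 N j =
      n0 * mu + ((N : ℝ) - n0) * alpha + ((j : ℝ) - n0) * th := by
  rw [levelZeroOutRate, min_eq_right (by gcongr)]

lemma levelZeroOutRate_pos (hmu : 0 ≤ mu) (halpha : 0 ≤ alpha) (hth : 0 < th) (hn0N : n0 ≤ N)
    (hn0j : n0 < j) : 0 < levelZeroOutRate mu alpha th n0 N j := by
  have hmin : 0 ≤ min ((j : ℝ) - n0) ((N : ℝ) - n0) := by
    apply le_min <;> simp only [sub_nonneg, Nat.cast_le] <;> omega
  have hjn0 : 0 < (j : ℝ) - n0 := sub_pos.mpr (by exact_mod_cast hn0j)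
  unfold levelZeroOutRate
  positivity

lemma le_levelZeroOutRate_succ (halpha : 0 ≤ alpha) (hn0N : n0 ≤ N) (hn0j : n0 ≤ j + 1) :
    n0 * mu + ((j : ℝ) + 1 - n0) * th ≤ levelZeroOutRate mu alpha th n0 N (j + 1) := by
  have hmin : 0 ≤ min (((j + 1 : ℕ) : ℝ) - n0) ((N : ℝ) - n0) := by
    apply le_min <;> simp only [sub_nonneg, Nat.cast_le] <;> omega
  unfold levelZeroOutRate
  push_cast at hmin ⊢
  linarith [mul_nonneg hmin halpha]

end levelZeroOutRate

/-- Backward recursion coefficients `b^{(0)}_j` for the level-0 stationary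
probabilities of the M/M/N/K setup queue with abandonments: positivity and
upper bound. -/
theorem stmt_0 (lam mu alpha th : ℝ) (hlam : 0 < lam) (hmu : 0 < mu)
    (halpha : 0 < alpha) (hth : 0 < th)
    (n0 N K : ℕ) (hn0N : n0 ≤ N) (hNK : N ≤ K)
    (b : ℕ → ℝ)
    (hbK : b K = lam / (n0 * mu + ((N : ℝ) - n0) * alpha + ((K : ℝ) - n0) * th))
    (hbrec : ∀ j : ℕ, n0 + 1 ≤ j → j < K →
      b j = lam / (lam + n0 * mu + min ((j : ℝ) - n0) ((N : ℝ) - n0) * alpha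
        + ((j : ℝ) - n0) * th - (n0 * mu + ((j : ℝ) + 1 - n0) * th) * b (j + 1))) :
    ∀ j : ℕ, n0 + 1 ≤ j → j ≤ K →
      0 < b j ∧
      b j ≤ lam / (n0 * mu + min ((j : ℝ) - n0) ((N : ℝ) - n0) * alpha
        + ((j : ℝ) - n0) * th) := by
  refine backward_recursion_bounds hlam (D := levelZeroOutRate mu alpha th n0 N)
    (c := fun j => n0 * mu + ((j : ℝ) + 1 - n0) * th) ?_ ?_ ?_ ?_
  · exact fun j hj _ => levelZeroOutRate_pos hmu.le halpha.le hth hn0N hj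
  · intro j hj _
    have hj' : (0 : ℝ) ≤ j + 1 - n0 := sub_nonneg.mpr (by exact_mod_cast (by omega : n0 ≤ j + 1))
    exact ⟨by positivity, le_levelZeroOutRate_succ halpha.le hn0N (by omega)⟩
  · rw [levelZeroOutRate_of_le hNK, hbK]
  · intro j hj hjK
    rw [hbrec j hj hjK, levelZeroOutRate]
    ring_nf
end

section
/- Let λ, μ, θ > 0, n_k ≤ K natural numbers, and let (π_j) be nonnegative reals. Define a, b : ℕ → ℝ backwards by a(K) = α·π_K / (n_kμ + (K − n_k)θ), b(K) = λ / (n_kμ + (K − n_k)θ) (for a fixed α > 0 and constant c_j ≥ 0 multiplying π_j), and for n_k + 1 ≤ j ≤ K − 1: a(j) = ((n_kμ + (j + 1 − n_k)θ)·a(j+1) + c_j·π_j) / D(j), b(j) = λ / D(j), where D(j) = λ + n_kμ + (j − n_k)θ − (n_kμ + (j + 1 − n_k)θ)·b(j+1). Then a(j) ≥ 0 for all n_k + 1 ≤ j ≤ K. -/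
/-!
Write `M j = n_k μ + (j - n_k) θ` for the total outflow rate at level `j`, so that the
recursion reads `b j = λ / D j`, `a j = (M (j+1) a (j+1) + c_j π_j) / D j` with
`D j = λ + M j - M (j+1) b (j+1)`. Going down from `K`, the invariant
`M j * b j ≤ λ` (an equality at `j = K`) gives `D j ≥ M j > 0`, and then `M j * b j ≤ λ`
again because `M j ≤ D j`; positivity of the denominators makes every `a j` a
nonnegative combination of nonnegative terms.
-/

section BackwardRecursion

variable {lam m m' b' : ℝ}

lemma recursion_denominator_pos (hm : 0 < m) (hb : m' * b' ≤ lam) :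
    0 < lam + m - m' * b' := by
  linarith

lemma mul_div_recursion_denominator_le (hlam : 0 ≤ lam) (hm : 0 < m) (hb : m' * b' ≤ lam) :
    m * (lam / (lam + m - m' * b')) ≤ lam := by
  have hD := recursion_denominator_pos hm hb
  rw [mul_div_left_comm]
  exact mul_le_of_le_one_right hlam ((div_le_one hD).2 (by linarith))

theorem backwardRecursion_nonneg_and_mul_le (lam : ℝ) (hlam : 0 ≤ lam) (M a b c : ℕ → ℝ)
    (lo K : ℕ) (hM : ∀ j, lo ≤ j → 0 < M j) (hc : ∀ j, lo ≤ j → j < K → 0 ≤ c j)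
    (haK : 0 ≤ a K) (hbK : M K * b K ≤ lam)
    (harec : ∀ j, lo ≤ j → j < K →
      a j = (M (j + 1) * a (j + 1) + c j) / (lam + M j - M (j + 1) * b (j + 1)))
    (hbrec : ∀ j, lo ≤ j → j < K → b j = lam / (lam + M j - M (j + 1) * b (j + 1)))
    {j : ℕ} (hlo : lo ≤ j) (hjK : j ≤ K) : 0 ≤ a j ∧ M j * b j ≤ lam := by
  refine Nat.decreasingInduction' (P := fun k => 0 ≤ a k ∧ M k * b k ≤ lam) ?_ hjK ⟨haK, hbK⟩
  rintro k hkK hjk ⟨ha, hb⟩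
  have hlok := hlo.trans hjk
  have hMk := hM k hlok
  have hD := recursion_denominator_pos hMk hb
  refine ⟨?_, ?_⟩
  · rw [harec k hlok hkK]
    have hMk1 := hM (k + 1) (by omega)
    exact div_nonneg (add_nonneg (mul_nonneg hMk1.le ha) (hc k hlok hkK)) hD.le
  · rw [hbrec k hlok hkK]
    exact mul_div_recursion_denominator_le hlam hMk hb

end BackwardRecursion

lemma outflowRate_pos {mu th : ℝ} (hmu : 0 < mu) (hth : 0 < th) {nk j : ℕ} (hj : nk + 1 ≤ j) :
    0 < nk * mu + ((j : ℝ) - nk) * th := by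
  have hj' : (nk : ℝ) + 1 ≤ j := by exact_mod_cast hj
  have : 0 < ((j : ℝ) - nk) * th := mul_pos (by linarith) hth
  positivity

theorem stmt_4_general (lam mu th alpha : ℝ) (hlam : 0 < lam) (hmu : 0 < mu)
    (hth : 0 < th) (halpha : 0 < alpha)
    (nk K : ℕ)
    (pi : ℕ → ℝ) (hpi : ∀ j, 0 ≤ pi j)
    (c : ℕ → ℝ) (hc : ∀ j, 0 ≤ c j)
    (a b : ℕ → ℝ)
    (haK : a K = alpha * pi K / (nk * mu + ((K : ℝ) - nk) * th))
    (hbK : b K = lam / (nk * mu + ((K : ℝ) - nk) * th))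
    (harec : ∀ j : ℕ, nk + 1 ≤ j → j < K →
      a j = ((nk * mu + ((j : ℝ) + 1 - nk) * th) * a (j + 1) + c j * pi j) /
        (lam + nk * mu + ((j : ℝ) - nk) * th
          - (nk * mu + ((j : ℝ) + 1 - nk) * th) * b (j + 1)))
    (hbrec : ∀ j : ℕ, nk + 1 ≤ j → j < K →
      b j = lam / (lam + nk * mu + ((j : ℝ) - nk) * th
        - (nk * mu + ((j : ℝ) + 1 - nk) * th) * b (j + 1))) :
    ∀ j : ℕ, nk + 1 ≤ j → j ≤ K → 0 ≤ a j := by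
  intro j hj hjK
  set M : ℕ → ℝ := fun i => nk * mu + ((i : ℝ) - nk) * th with hM_def
  have hM : ∀ i, nk + 1 ≤ i → 0 < M i := fun i hi => outflowRate_pos hmu hth hi
  have hMK : 0 < M K := hM K (hj.trans hjK)
  refine (backwardRecursion_nonneg_and_mul_le lam hlam.le M a b (fun i => c i * pi i) (nk + 1) K
    hM (fun i _ _ => mul_nonneg (hc i) (hpi i)) ?_ ?_ ?_ ?_ hj hjK).1
  · rw [haK]; exact div_nonneg (mul_nonneg halpha.le (hpi K)) hMK.le
  · rw [hbK, mul_div_cancel₀ _ hMK.ne']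
  · intro i hi hiK
    simpa only [hM_def, Nat.cast_succ, add_assoc] using harec i hi hiK
  · intro i hi hiK
    simpa only [hM_def, Nat.cast_succ, add_assoc] using hbrec i hi hiK

/-- Theorem 3 (a-coefficient part): nonnegativity of the inhomogeneous
coefficients `a^{(k)}_j` in the backward recursion at the top level of the
Markov chain of the M/M/N/K setup queue with abandonments. -/
theorem stmt_4 (lam mu th alpha : ℝ) (hlam : 0 < lam) (hmu : 0 < mu)
    (hth : 0 < th) (halpha : 0 < alpha)
    (nk K : ℕ) (hnkK : nk ≤ K)
    (pi : ℕ → ℝ) (hpi : ∀ j, 0 ≤ pi j)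
    (c : ℕ → ℝ) (hc : ∀ j, 0 ≤ c j)
    (a b : ℕ → ℝ)
    (haK : a K = alpha * pi K / (nk * mu + ((K : ℝ) - nk) * th))
    (hbK : b K = lam / (nk * mu + ((K : ℝ) - nk) * th))
    (harec : ∀ j : ℕ, nk + 1 ≤ j → j < K →
      a j = ((nk * mu + ((j : ℝ) + 1 - nk) * th) * a (j + 1) + c j * pi j) /
        (lam + nk * mu + ((j : ℝ) - nk) * th
          - (nk * mu + ((j : ℝ) + 1 - nk) * th) * b (j + 1)))
    (hbrec : ∀ j : ℕ, nk + 1 ≤ j → j < K →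
      b j = lam / (lam + nk * mu + ((j : ℝ) - nk) * th
        - (nk * mu + ((j : ℝ) + 1 - nk) * th) * b (j + 1))) :
    ∀ j : ℕ, nk + 1 ≤ j → j ≤ K → 0 ≤ a j :=
  stmt_4_general lam mu th alpha hlam hmu hth halpha nk K pi hpi c hc a b haK hbK harec hbrec
end
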